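/- Let E be a finite-dimensional real inner product space, let M : E →ₗ[ℝ] E be self-adjoint and positive semidefinite, and let V be a subspace of E with (ker M) ⊓ V = ⊥, so that N := M ∘ P_V + P_{V⊥} is bijective; define the Bott–Duffin inverse A := P_V ∘ N⁻¹. Then for every d in the image M(V) := {M w : w ∈ V}, the vector u := A d lies in V, satisfies M u = d, and is the unique element of V with M u = d. -/

import Mathlib

/-! On `V` the operator `N = M ∘ P_V + P_{V⊥}` agrees with `M`, so `N⁻¹ (M w) = w` for `w ∈ V`,
and projecting back onto `V` changes nothing: the Bott–Duffin inverse sends `M w` to `w`.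
Uniqueness is injectivity of `M` on `V`, which is exactly `ker M ⊓ V = ⊥`. -/

open RealInnerProductSpace

/-- The orthogonal projection onto a subspace, as a linear endomorphism. -/
noncomputable def orthProj {E : Type*} [NormedAddCommGroup E] [InnerProductSpace ℝ E]
    [FiniteDimensional ℝ E] (V : Submodule ℝ E) : E →ₗ[ℝ] E :=
  (V.subtypeL.comp (V.orthogonalProjection)).toLinearMap

section

variable {E : Type*} [NormedAddCommGroup E] [InnerProductSpace ℝ E] [FiniteDimensional ℝ E]

lemma orthProj_apply (V : Submodule ℝ E) (x : E) : orthProj V x = V.starProjection x :=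
  (V.starProjection_apply x).symm

lemma orthProj_apply_of_mem {V : Submodule ℝ E} {w : E} (hw : w ∈ V) : orthProj V w = w := by
  rw [orthProj_apply, Submodule.starProjection_eq_self_iff.mpr hw]

lemma orthProj_orthogonal_apply_of_mem {V : Submodule ℝ E} {w : E} (hw : w ∈ V) :
    orthProj Vᗮ w = 0 := by
  rw [orthProj_apply, Submodule.starProjection_orthogonal_val, ← orthProj_apply,
    orthProj_apply_of_mem hw, sub_self]

lemma bottDuffinOperator_apply_of_mem (M : E →ₗ[ℝ] E) {V : Submodule ℝ E} {w : E} (hw : w ∈ V) :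
    (M ∘ₗ orthProj V + orthProj Vᗮ) w = M w := by
  simp only [LinearMap.add_apply, LinearMap.comp_apply, orthProj_apply_of_mem hw,
    orthProj_orthogonal_apply_of_mem hw, add_zero]

lemma bottDuffinInverse_apply_map_of_mem (M : E →ₗ[ℝ] E) {V : Submodule ℝ E}
    (hN : Function.Bijective (M ∘ₗ orthProj V + orthProj Vᗮ)) {w : E} (hw : w ∈ V) :
    orthProj V ((LinearEquiv.ofBijective _ hN).symm (M w)) = w := by
  rw [← bottDuffinOperator_apply_of_mem M hw, LinearEquiv.ofBijective_symm_apply_apply,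
    orthProj_apply_of_mem hw]

end

theorem bott_duffin_solves_constrained_system_general
    {E : Type*} [NormedAddCommGroup E] [InnerProductSpace ℝ E] [FiniteDimensional ℝ E]
    (M : E →ₗ[ℝ] E)
    (V : Submodule ℝ E)
    (hker : LinearMap.ker M ⊓ V = ⊥)
    (N : E →ₗ[ℝ] E) (hN : N = M ∘ₗ orthProj V + orthProj Vᗮ)
    (hNbij : Function.Bijective N)
    (A : E →ₗ[ℝ] E)
    (hA : A = orthProj V ∘ₗ (LinearEquiv.ofBijective N hNbij).symm.toLinearMap)
    (d : E) (hd : ∃ w ∈ V, M w = d) :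
    A d ∈ V ∧ M (A d) = d ∧ ∀ u ∈ V, M u = d → u = A d := by
  obtain ⟨w, hwV, rfl⟩ := hd
  subst hN hA
  have hAw : (orthProj V ∘ₗ (LinearEquiv.ofBijective _ hNbij).symm.toLinearMap) (M w) = w :=
    bottDuffinInverse_apply_map_of_mem M hNbij hwV
  have hinj : Set.InjOn M V :=
    LinearMap.injOn_of_disjoint_ker le_rfl (disjoint_iff.mpr (by rwa [inf_comm]))
  rw [hAw]
  exact ⟨hwV, rfl, fun u hu hMu => hinj hu hwV hMu⟩

theorem bott_duffin_solves_constrained_system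
    {E : Type*} [NormedAddCommGroup E] [InnerProductSpace ℝ E] [FiniteDimensional ℝ E]
    (M : E →ₗ[ℝ] E)
    (hMsym : ∀ x y : E, ⟪M x, y⟫ = ⟪x, M y⟫)
    (hMpsd : ∀ x : E, 0 ≤ ⟪M x, x⟫)
    (V : Submodule ℝ E)
    (hker : LinearMap.ker M ⊓ V = ⊥)
    (N : E →ₗ[ℝ] E) (hN : N = M ∘ₗ orthProj V + orthProj Vᗮ)
    (hNbij : Function.Bijective N)
    (A : E →ₗ[ℝ] E)
    (hA : A = orthProj V ∘ₗ (LinearEquiv.ofBijective N hNbij).symm.toLinearMap)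
    (d : E) (hd : ∃ w ∈ V, M w = d) :
    A d ∈ V ∧ M (A d) = d ∧ ∀ u ∈ V, M u = d → u = A d :=
  bott_duffin_solves_constrained_system_general M V hker N hN hNbij A hA d hd
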